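/- If all n+1 partial derivatives of f vanish at a point (y, x₁, …, x_n) ∈ ℂ^{n+1}, then f(y, x₁, …, x_n) = −2λ₀y − (3d−1)·λ_n·x_n − (1/(3d−1))·λ'_n·x_n^{3d−1} − (3d−1)·Σ_{i=1}^{n−1} λ_i·x_i. -/
import Mathlib


open MvPolynomial

/-- The deformed Brieskorn–Pham polynomial
`f = y³ − 3λ₀y + Σ_{i=1}^{n−1} (x_i^{3d} − 3d·λ_i·x_i) + x_n^{3d} − 3d·λ_n·x_n
− (3d/(3d−1))·λ'_n·x_n^{3d−1} − 3λ·(λ₀·y·x_n^{2d} + d·Σ_{i=1}^{n−1} λ_i·x_i·x_n^{3d−1})`,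
with `n = m+1`, in the variables `y` (variable `0`), `x_i` (variable `i` for
`1 ≤ i ≤ m`) and `x_n` (the last variable). -/
noncomputable def asympPoly (m d : ℕ) (l l0 : ℂ) (li : Fin m → ℂ) (ln ln' : ℂ) :
    MvPolynomial (Fin (m + 2)) ℂ :=
  X 0 ^ 3 - C (3 * l0) * X 0
    + ∑ i : Fin m,
        (X i.succ.castSucc ^ (3 * d) - C (3 * (d : ℂ) * li i) * X i.succ.castSucc)
    + X (Fin.last (m + 1)) ^ (3 * d) - C (3 * (d : ℂ) * ln) * X (Fin.last (m + 1))
    - C ((3 * (d : ℂ)) / (3 * (d : ℂ) - 1) * ln') * X (Fin.last (m + 1)) ^ (3 * d - 1)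
    - C (3 * l) * (C l0 * X 0 * X (Fin.last (m + 1)) ^ (2 * d)
        + C (d : ℂ) * ∑ i : Fin m,
            C (li i) * X i.succ.castSucc * X (Fin.last (m + 1)) ^ (3 * d - 1))

/-- the value of `f` at any critical point is
`−2λ₀y − (3d−1)λ_n x_n − (1/(3d−1))λ'_n x_n^{3d−1} − (3d−1)·Σ_i λ_i x_i`. -/
theorem asympPoly_value_at_critical_points (m d : ℕ) (hd : 1 ≤ d)
    (l l0 : ℂ) (li : Fin m → ℂ) (ln ln' : ℂ) (w : Fin (m + 2) → ℂ)
    (hcrit : ∀ j, eval w (pderiv j (asympPoly m d l l0 li ln ln')) = 0) :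
    eval w (asympPoly m d l l0 li ln ln') =
      -2 * l0 * w 0 - (3 * (d : ℂ) - 1) * ln * w (Fin.last (m + 1))
        - (1 / (3 * (d : ℂ) - 1)) * ln' * w (Fin.last (m + 1)) ^ (3 * d - 1)
        - (3 * (d : ℂ) - 1) * ∑ i : Fin m, li i * w i.succ.castSucc := by
  obtain ⟨e, rfl⟩ : ∃ e, d = e + 1 := ⟨d - 1, by omega⟩
  clear hd
  have hne1 : ∀ x : Fin m, (x.succ.castSucc : Fin (m+2)) ≠ 0 := by
    intro x; simp [Fin.ext_iff]
  have hne2 : ∀ x : Fin m, (x.succ.castSucc : Fin (m+2)) ≠ Fin.last (m+1) := by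
    intro x; exact (Fin.castSucc_lt_last _).ne
  have hne3 : (Fin.last (m+1) : Fin (m+2)) ≠ 0 := by simp [Fin.ext_iff]
  have p1 : ∀ x : Fin m, pderiv (0 : Fin (m+2)) (X x.succ.castSucc : MvPolynomial (Fin (m+2)) ℂ) = 0 :=
    fun x => pderiv_X_of_ne (hne1 x)
  have p2 : ∀ x : Fin m, pderiv (Fin.last (m+1)) (X x.succ.castSucc : MvPolynomial (Fin (m+2)) ℂ) = 0 :=
    fun x => pderiv_X_of_ne (hne2 x)
  have p3 : pderiv (Fin.last (m+1)) (X 0 : MvPolynomial (Fin (m+2)) ℂ) = 0 :=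
    pderiv_X_of_ne (Ne.symm hne3)
  have pd : ∀ j : Fin (m+2), pderiv j (((e+1 : ℕ) : MvPolynomial (Fin (m+2)) ℂ)) = 0 := by
    intro j
    rw [← map_natCast (C : ℂ →+* MvPolynomial (Fin (m+2)) ℂ) (e+1)]
    exact pderiv_C
  have E1 : 3 * (e+1) = 3*e+3 := by omega
  have E2 : 3 * (e+1) - 1 = 3*e+2 := by omega
  have E3 : 3 * (e+1) - 1 - 1 = 3*e+1 := by omega
  have E4 : 2 * (e+1) = 2*e+2 := by omega
  have E5 : 2 * (e+1) - 1 = 2*e+1 := by omega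
  have h0 := hcrit 0
  simp only [asympPoly, map_sub, map_add, map_sum, pderiv_pow, pderiv_X_self,
    pderiv_C_mul, pderiv_mul, pderiv_C, p1, pd,
    pderiv_X_of_ne hne3, mul_zero, zero_mul, add_zero, zero_add, mul_one,
    map_mul, map_pow, eval_X, eval_C, map_natCast, map_zero, Finset.sum_const_zero,
    sub_zero, E1, E2, E3, E4, E5] at h0
  push_cast at h0
  have hn := hcrit (Fin.last (m+1))
  simp only [asympPoly, map_sub, map_add, map_sum, pderiv_pow, pderiv_X_self,
    pderiv_C_mul, pderiv_mul, pderiv_C, p2, p3, pd,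
    mul_zero, zero_mul, add_zero, zero_add, mul_one,
    map_mul, map_pow, eval_X, eval_C, map_natCast, map_zero, Finset.sum_const_zero,
    sub_zero, zero_sub, E1, E2, E3, E4, E5] at hn
  push_cast at hn
  have hi : ∀ i : Fin m, (3*((e:ℂ)+1)) * w i.succ.castSucc ^ (3*e+2) - 3*((e:ℂ)+1)*li i
      - 3*l*(((e:ℂ)+1) * (li i * w (Fin.last (m+1)) ^ (3*e+2))) = 0 := by
    intro i
    have h := hcrit i.succ.castSucc
    simp only [asympPoly, map_sub, map_add, map_sum, pderiv_pow, pderiv_X_self,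
      pderiv_C_mul, pderiv_mul, pderiv_C, pd,
      pderiv_X_of_ne (Ne.symm (hne1 i)), pderiv_X_of_ne (hne2 i), pderiv_X,
      Pi.single_apply, Fin.castSucc_inj, Fin.succ_inj,
      mul_zero, zero_mul, add_zero, zero_add, mul_one,
      map_mul, map_pow, eval_X, eval_C, map_natCast, map_zero, Finset.sum_const_zero,
      sub_zero, zero_sub, E1, E2, E3, E4, E5] at h
    simp only [if_neg (Ne.symm (hne2 i)), map_zero, mul_zero, sub_zero, add_zero, zero_mul,
      apply_ite (eval w), map_one, mul_ite, mul_one, ite_mul, zero_mul,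
      Finset.sum_sub_distrib, Finset.sum_ite_eq', Finset.mem_univ, if_true] at h
    push_cast at h
    linear_combination h
  -- normalize the goal's casts and exponents
  push_cast [E2]
  set A := ∑ x : Fin m, w x.succ.castSucc ^ (3*e+3) with hA
  set B := ∑ x : Fin m, li x * w x.succ.castSucc with hB
  rw [← Finset.sum_mul, ← hB] at hn
  have hs : (3*((e:ℂ)+1)) * A - (3*((e:ℂ)+1)) * B
      - (3*l*((e:ℂ)+1) * w (Fin.last (m+1)) ^ (3*e+2)) * B = 0 := by
    have hz : ∑ x : Fin m, ((3*((e:ℂ)+1)) * w x.succ.castSucc ^ (3*e+3)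
        - (3*((e:ℂ)+1)) * (li x * w x.succ.castSucc)
        - (3*l*((e:ℂ)+1) * w (Fin.last (m+1)) ^ (3*e+2)) * (li x * w x.succ.castSucc)) = 0 :=
      Finset.sum_eq_zero fun x _ => by linear_combination w x.succ.castSucc * hi x
    rw [Finset.sum_sub_distrib, Finset.sum_sub_distrib, ← Finset.mul_sum, ← Finset.mul_sum,
      ← Finset.mul_sum, ← hA, ← hB] at hz
    exact hz
  have hf : eval w (asympPoly m (e+1) l l0 li ln ln') =
      w 0 ^ 3 - 3*l0*w 0 + (A - 3*((e:ℂ)+1)*B)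
      + w (Fin.last (m+1)) ^ (3*e+3) - 3*((e:ℂ)+1)*ln*w (Fin.last (m+1))
      - (3*((e:ℂ)+1))/(3*((e:ℂ)+1)-1)*ln'*w (Fin.last (m+1)) ^ (3*e+2)
      - 3*l*(l0*w 0*w (Fin.last (m+1)) ^ (2*e+2)
          + ((e:ℂ)+1) * (B * w (Fin.last (m+1)) ^ (3*e+2))) := by
    simp only [asympPoly, map_sub, map_add, map_sum, map_mul, map_pow, eval_X, eval_C,
      map_natCast, E1, E2, E3, E4, E5]
    push_cast
    rw [Finset.sum_sub_distrib, ← Finset.sum_mul, ← hA, ← hB]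
    rw [show (∑ x : Fin m, 3 * ((e:ℂ)+1) * li x * w x.succ.castSucc) = 3*((e:ℂ)+1)*B from by
      rw [hB, Finset.mul_sum]; exact Finset.sum_congr rfl fun x _ => by ring]
  have hP : (3*((e:ℂ)+1)) ≠ 0 := by
    intro h
    have h1 : ((3*e+3 : ℕ) : ℂ) ≠ 0 := Nat.cast_ne_zero.mpr (by omega)
    apply h1; push_cast; linear_combination h
  have hQ : (3*((e:ℂ)+1)-1) ≠ 0 := by
    intro h
    have h1 : ((3*e+2 : ℕ) : ℂ) ≠ 0 := Nat.cast_ne_zero.mpr (by omega)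
    apply h1; push_cast; linear_combination h
  refine mul_left_cancel₀ hQ (mul_left_cancel₀ hP ?_)
  rw [hf]
  linear_combination ((3*((e:ℂ)+1))*(3*((e:ℂ)+1)-1)*(w 0)/3) * h0
    + ((3*((e:ℂ)+1)-1)*(w (Fin.last (m+1)))) * hn + (3*((e:ℂ)+1)-1) * hs
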